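/- arXiv:2008.05345 — 2 statements merged into one kernel-verified Lean document; each statement's English description precedes it below -/
import Mathlib

section
/- Let G be a graph, U the set of its universal vertices, and k a positive integer with |U| ≤ k−1 and k ≤ δ(G)+1. Then γ_{×k}(G) = γ_{×(k−|U|)}(G − U) + |U|. -/
open Set

def closedNbhd {V : Type*} (G : SimpleGraph V) (v : V) : Set V :=
  insert v (G.neighborSet v)

def IsKTupleDomSet {V : Type*} (G : SimpleGraph V) (k : ℕ) (D : Set V) : Prop :=
  ∀ v : V, k ≤ (closedNbhd G v ∩ D).ncard

noncomputable def ktupleDomNum {V : Type*} (G : SimpleGraph V) (k : ℕ) : ℕ :=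
  sInf {d | ∃ D : Set V, IsKTupleDomSet G k D ∧ D.ncard = d}

def IsUniversal {V : Type*} (G : SimpleGraph V) (u : V) : Prop :=
  ∀ w : V, w ≠ u → G.Adj u w

/-! Every universal vertex lies in every closed neighbourhood, so adding the set `U`
of universal vertices to a `(k - |U|)`-tuple dominating set of `G - U` gives a `k`-tuple
dominating set of `G`; the degree bound guarantees a non-universal vertex, which takes care of
the vertices of `U` themselves. Conversely, a `k`-tuple dominating set `D` of `G` has at least
`|U|` elements, so it has a subset `T` of size `|U|` containing `D ∩ U`; removing `T` lowers
every count by at most `|U|` and leaves a `(k - |U|)`-tuple dominating set of `G - U` of size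
`|D| - |U|`. The degree bound also makes `V` itself `k`-tuple dominating, so `ktupleDomNum G k`
is not the junk value `sInf ∅ = 0`. -/

theorem Nat.sInf_eq_sInf_add_of_forall {A B : Set ℕ} {m : ℕ} (hA : A.Nonempty)
    (hBA : ∀ b ∈ B, b + m ∈ A) (hAB : ∀ a ∈ A, ∃ b ∈ B, b + m ≤ a) :
    sInf A = sInf B + m := by
  obtain ⟨b, hb, hba⟩ := hAB _ (Nat.sInf_mem hA)
  refine le_antisymm (Nat.sInf_le (hBA _ (Nat.sInf_mem ⟨b, hb⟩))) ?_
  exact (Nat.add_le_add_right (Nat.sInf_le hb) m).trans hba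

section ClosedNbhd

variable {V : Type*} (G : SimpleGraph V)

lemma mem_closedNbhd_comm {u v : V} : u ∈ closedNbhd G v ↔ v ∈ closedNbhd G u := by
  simp only [closedNbhd, mem_insert_iff, SimpleGraph.mem_neighborSet, eq_comm, G.adj_comm]

lemma closedNbhd_eq_univ {u : V} (hu : IsUniversal G u) : closedNbhd G u = univ :=
  eq_univ_of_forall fun w => (eq_or_ne w u).elim Or.inl fun h => Or.inr (hu w h)

lemma mem_closedNbhd_of_isUniversal {u : V} (hu : IsUniversal G u) (v : V) :
    u ∈ closedNbhd G v :=
  (mem_closedNbhd_comm G).2 (closedNbhd_eq_univ G hu ▸ mem_univ v)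

lemma ncard_closedNbhd [Finite V] (v : V) :
    (closedNbhd G v).ncard = (G.neighborSet v).ncard + 1 :=
  ncard_insert_of_notMem G.notMem_neighborSet_self

lemma image_val_closedNbhd_induce (s : Set V) (x : s) :
    Subtype.val '' closedNbhd (G.induce s) x = closedNbhd G x ∩ s := by
  ext w
  simp only [closedNbhd, mem_image, mem_insert_iff, SimpleGraph.mem_neighborSet,
    SimpleGraph.comap_adj, mem_inter_iff, Function.Embedding.subtype_apply]
  constructor
  · rintro ⟨y, hy, rfl⟩
    exact ⟨hy.imp (congrArg Subtype.val) id, y.2⟩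
  · rintro ⟨rfl | hw, hws⟩
    · exact ⟨x, Or.inl rfl, rfl⟩
    · exact ⟨⟨w, hws⟩, Or.inr hw, rfl⟩

lemma ncard_closedNbhd_induce_inter (s : Set V) (x : s) (D : Set s) :
    (closedNbhd (G.induce s) x ∩ D).ncard = (closedNbhd G x ∩ Subtype.val '' D).ncard := by
  rw [← ncard_image_of_injective _ Subtype.val_injective, image_inter Subtype.val_injective,
    image_val_closedNbhd_induce, inter_assoc,
    inter_eq_right.2 (Subtype.coe_image_subset s D)]

lemma disjoint_image_val_compl (U : Set V) (D : Set ↥Uᶜ) : Disjoint (Subtype.val '' D) U :=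
  disjoint_compl_left.mono_left (Subtype.coe_image_subset _ D)

lemma ncard_image_val_union [Finite V] (U : Set V) (D : Set ↥Uᶜ) :
    (Subtype.val '' D ∪ U).ncard = D.ncard + U.ncard := by
  rw [ncard_union_eq (disjoint_image_val_compl U D),
    ncard_image_of_injective _ Subtype.val_injective]

end ClosedNbhd

section KTupleDomination

variable {V : Type*} (G : SimpleGraph V)

lemma isKTupleDomSet_univ {k : ℕ} (h : ∀ v, k ≤ (closedNbhd G v).ncard) :
    IsKTupleDomSet G k univ := fun v => by
  rw [inter_univ]
  exact h v

lemma isKTupleDomSet_induce_iff {s : Set V} {k : ℕ} {D : Set s} :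
    IsKTupleDomSet (G.induce s) k D ↔
      ∀ x ∈ s, k ≤ (closedNbhd G x ∩ Subtype.val '' D).ncard := by
  simp only [IsKTupleDomSet, ncard_closedNbhd_induce_inter, Subtype.forall]

variable {G} [Finite V]

lemma IsKTupleDomSet.sdiff {k : ℕ} {D : Set V} (hD : IsKTupleDomSet G k D) (T : Set V) :
    IsKTupleDomSet G (k - T.ncard) (D \ T) := fun v => by
  rw [← inter_sdiff_assoc]
  exact (Nat.sub_le_sub_right (hD v) _).trans (le_ncard_sdiff _ _)

lemma IsKTupleDomSet.le_ncard {k : ℕ} {D : Set V} (hD : IsKTupleDomSet G k D) (v : V) :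
    k ≤ D.ncard :=
  (hD v).trans (ncard_le_ncard inter_subset_right)

lemma IsKTupleDomSet.exists_induce_compl {k : ℕ} {D U : Set V} (hD : IsKTupleDomSet G k D)
    (hUk : U.ncard ≤ k) :
    ∃ D' : Set ↥Uᶜ, IsKTupleDomSet (G.induce Uᶜ) (k - U.ncard) D' ∧
      D'.ncard + U.ncard = D.ncard := by
  have hUD : U.ncard ≤ D.ncard := by
    obtain rfl | ⟨u, -⟩ := U.eq_empty_or_nonempty
    · simp
    · exact hUk.trans (hD.le_ncard u)
  obtain ⟨T, hDUT, hTD, hT⟩ :=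
    exists_subsuperset_card_eq inter_subset_left (ncard_le_ncard inter_subset_right) hUD
  have hDTU : D \ T ⊆ Uᶜ := fun x hx hxU => hx.2 (hDUT ⟨hx.1, hxU⟩)
  have himage : Subtype.val '' (Subtype.val ⁻¹' (D \ T) : Set ↥Uᶜ) = D \ T := by
    rw [Subtype.image_preimage_coe, inter_eq_right.2 hDTU]
  refine ⟨Subtype.val ⁻¹' (D \ T), (isKTupleDomSet_induce_iff G).2 fun x _ => ?_, ?_⟩
  · rw [himage, ← hT]
    exact hD.sdiff T x
  · rw [← ncard_image_of_injective _ Subtype.val_injective, himage, ncard_sdiff hTD, hT]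
    omega

lemma IsKTupleDomSet.image_val_union {k : ℕ} {U : Set V} (hU : ∀ u ∈ U, IsUniversal G u)
    (hne : U.Nonempty → Uᶜ.Nonempty) {D : Set ↥Uᶜ}
    (hD : IsKTupleDomSet (G.induce Uᶜ) k D) :
    IsKTupleDomSet G (k + U.ncard) (Subtype.val '' D ∪ U) := fun v => by
  have hUv : U ⊆ closedNbhd G v := fun u hu => mem_closedNbhd_of_isUniversal G (hU u hu) v
  rw [inter_union_distrib_left, inter_eq_right.2 hUv,
    ncard_union_eq ((disjoint_image_val_compl U D).mono_left inter_subset_right)]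
  refine Nat.add_le_add_right ?_ _
  by_cases hv : v ∈ U
  · obtain ⟨x, hx⟩ := hne ⟨v, hv⟩
    rw [closedNbhd_eq_univ G (hU v hv), univ_inter]
    exact ((isKTupleDomSet_induce_iff G).1 hD x hx).trans (ncard_le_ncard inter_subset_right)
  · exact (isKTupleDomSet_induce_iff G).1 hD v hv

end KTupleDomination

theorem stmt_4_general {V : Type*} [Fintype V] (G : SimpleGraph V)
    (U : Set V) (hU : U = {u : V | IsUniversal G u})
    (k : ℕ) (hUk : U.ncard ≤ k - 1)
    (hdeg : ∀ v : V, k ≤ (G.neighborSet v).ncard + 1) :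
    ktupleDomNum G k = ktupleDomNum (G.induce Uᶜ) (k - U.ncard) + U.ncard := by
  have hUniv : ∀ u ∈ U, IsUniversal G u := fun u hu => by rwa [hU] at hu
  have hne : U.Nonempty → Uᶜ.Nonempty := by
    rintro ⟨u, hu⟩
    by_contra hc
    rw [not_nonempty_iff_eq_empty, compl_empty_iff] at hc
    have : (G.neighborSet u).ncard < U.ncard := by
      refine ncard_lt_ncard (hc ▸ ssubset_univ_iff.2 fun h => ?_)
      exact G.notMem_neighborSet_self (h ▸ mem_univ u)
    have := hdeg u
    omega
  have hUk' : U.ncard ≤ k := by omega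
  refine Nat.sInf_eq_sInf_add_of_forall ?_ ?_ ?_
  · exact ⟨_, univ, isKTupleDomSet_univ G fun v => (ncard_closedNbhd G v).symm ▸ hdeg v, rfl⟩
  · rintro _ ⟨D, hD, rfl⟩
    refine ⟨_, ?_, ncard_image_val_union U D⟩
    simpa only [Nat.sub_add_cancel hUk'] using hD.image_val_union hUniv hne
  · rintro _ ⟨D, hD, rfl⟩
    obtain ⟨D', hD', hcard⟩ := hD.exists_induce_compl hUk'
    exact ⟨_, ⟨D', hD', rfl⟩, hcard.le⟩

theorem stmt_4 {V : Type*} [Fintype V] (G : SimpleGraph V)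
    (U : Set V) (hU : U = {u : V | IsUniversal G u})
    (k : ℕ) (hk : 0 < k) (hUk : U.ncard ≤ k - 1)
    (hdeg : ∀ v : V, k ≤ (G.neighborSet v).ncard + 1) :
    ktupleDomNum G k = ktupleDomNum (G.induce Uᶜ) (k - U.ncard) + U.ncard :=
  stmt_4_general G U hU k hUk hdeg
end

section
/- Let G be a co-biconvex graph with partition (C₁, C₂, U) where |U| = 1 and C₁, C₂ are nonempty cliques with no universal vertices in G − U. Then γ_{×2}(G) = 3. -/
/-!
A universal vertex `u` lies in every closed neighbourhood, and vertices `x ∈ C₁`, `y ∈ C₂`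
together dominate `G` (`u` is adjacent to both), so `{u, x, y}` is a 2-tuple dominating set
of size 3. Conversely, a 2-tuple dominating set `D` with `|D| ≤ 2`
satisfies `D ⊆ N[v]` for every `v`, i.e. it consists of universal vertices; but `u` is the
only universal vertex, while `|D| ≥ 2`.
-/

open Set

section KTupleDomination

variable {V : Type*} {G : SimpleGraph V}

theorem mem_closedNbhd {v w : V} : w ∈ closedNbhd G v ↔ w = v ∨ G.Adj v w := Iff.rfl

theorem mem_closedNbhd_of_isClique {C : Set V} (hC : G.IsClique C) {v w : V} (hv : v ∈ C)
    (hw : w ∈ C) : w ∈ closedNbhd G v := by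
  by_cases h : w = v
  · exact mem_closedNbhd.2 (Or.inl h)
  · exact mem_closedNbhd.2 (Or.inr (hC hv hw (Ne.symm h)))

theorem isUniversal_iff_forall_mem_closedNbhd {u : V} :
    IsUniversal G u ↔ ∀ v, u ∈ closedNbhd G v := by
  refine ⟨fun hu v => ?_, fun hu w hw => ?_⟩
  · by_cases h : u = v
    · exact mem_closedNbhd.2 (Or.inl h)
    · exact mem_closedNbhd.2 (Or.inr (hu v (Ne.symm h)).symm)
  · rcases mem_closedNbhd.1 (hu w) with h | h
    · exact absurd h.symm hw
    · exact h.symm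

theorem IsKTupleDomSet.subset_closedNbhd_of_ncard_le [Finite V] {k : ℕ} {D : Set V}
    (hD : IsKTupleDomSet G k D) (hle : D.ncard ≤ k) (v : V) : D ⊆ closedNbhd G v := by
  have h : closedNbhd G v ∩ D = D :=
    eq_of_subset_of_ncard_le inter_subset_right (hle.trans (hD v))
  exact h ▸ inter_subset_left

theorem IsKTupleDomSet.lt_ncard [Finite V] [Nonempty V] {k : ℕ} {D : Set V}
    (hD : IsKTupleDomSet G k D) (hk : {u | IsUniversal G u}.ncard < k) : k < D.ncard := by
  by_contra! hle
  have hsub : D ⊆ {u | IsUniversal G u} := fun w hw =>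
    isUniversal_iff_forall_mem_closedNbhd.2 fun v => hD.subset_closedNbhd_of_ncard_le hle v hw
  have hDk : k ≤ D.ncard :=
    (hD (Classical.arbitrary V)).trans (ncard_le_ncard inter_subset_right)
  have := ncard_le_ncard hsub
  omega

theorem isKTupleDomSet_two_insert_of_isUniversal [Finite V] {u : V} {S : Set V}
    (hu : IsUniversal G u) (hS : ∀ v, ∃ s ∈ S, s ≠ u ∧ s ∈ closedNbhd G v) :
    IsKTupleDomSet G 2 (insert u S) := by
  intro v
  obtain ⟨s, hsS, hsu, hsv⟩ := hS v
  have hsub : ({u, s} : Set V) ⊆ closedNbhd G v ∩ insert u S := by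
    rintro w (rfl | rfl)
    · exact ⟨isUniversal_iff_forall_mem_closedNbhd.1 hu v, mem_insert _ _⟩
    · exact ⟨hsv, mem_insert_of_mem _ hsS⟩
  calc 2 = ({u, s} : Set V).ncard := (ncard_pair hsu.symm).symm
    _ ≤ _ := ncard_le_ncard hsub

theorem ktupleDomNum_eq_of_isKTupleDomSet {k n : ℕ} {D : Set V} (hD : IsKTupleDomSet G k D)
    (hDn : D.ncard = n) (hmin : ∀ E, IsKTupleDomSet G k E → n ≤ E.ncard) :
    ktupleDomNum G k = n :=
  le_antisymm (Nat.sInf_le ⟨D, hD, hDn⟩)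
    (le_csInf ⟨n, D, hD, hDn⟩ fun _ ⟨E, hE, hEd⟩ => hEd ▸ hmin E hE)

end KTupleDomination

theorem stmt_12 {V : Type*} [Fintype V] (G : SimpleGraph V) (C₁ C₂ U : Set V)
    (hpart : C₁ ∪ C₂ ∪ U = Set.univ)
    (h12 : Disjoint C₁ C₂) (h1U : Disjoint C₁ U) (h2U : Disjoint C₂ U)
    (hc1 : G.IsClique C₁) (hc2 : G.IsClique C₂)
    (hUuniv : ∀ u ∈ U, IsUniversal G u) (hUcard : U.ncard = 1)
    (hne1 : C₁.Nonempty) (hne2 : C₂.Nonempty)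
    (hnouniv : ∀ v ∈ C₁ ∪ C₂, ∃ w ∈ C₁ ∪ C₂, w ≠ v ∧ ¬ G.Adj v w) :
    ktupleDomNum G 2 = 3 := by
  obtain ⟨u, rfl⟩ := ncard_eq_one.1 hUcard
  obtain ⟨x, hx⟩ := hne1
  obtain ⟨y, hy⟩ := hne2
  have hu : IsUniversal G u := hUuniv u rfl
  have hxu : x ≠ u := h1U.ne_of_mem hx rfl
  have hyu : y ≠ u := h2U.ne_of_mem hy rfl
  have hcover : ∀ v, v ≠ u → v ∈ C₁ ∪ C₂ := fun v hvu =>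
    (show v ∈ C₁ ∪ C₂ ∪ {u} from hpart ▸ mem_univ v).resolve_right hvu
  have hdom : IsKTupleDomSet G 2 {u, x, y} := by
    refine isKTupleDomSet_two_insert_of_isUniversal hu fun v => ?_
    by_cases hvu : v = u
    · exact ⟨x, by simp, hxu, mem_closedNbhd.2 (Or.inr (hvu ▸ hu x hxu))⟩
    rcases hcover v hvu with hv | hv
    · exact ⟨x, by simp, hxu, mem_closedNbhd_of_isClique hc1 hv hx⟩
    · exact ⟨y, by simp, hyu, mem_closedNbhd_of_isClique hc2 hv hy⟩
  have hcard : ({u, x, y} : Set V).ncard = 3 :=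
    ncard_eq_three.2 ⟨u, x, y, hxu.symm, hyu.symm, h12.ne_of_mem hx hy, rfl⟩
  have huniv : {w | IsUniversal G w}.ncard < 2 := by
    have hsub : {w | IsUniversal G w} ⊆ {u} := fun w hw => by
      by_contra hwu
      obtain ⟨w', -, hw'w, hnadj⟩ := hnouniv w (hcover w hwu)
      exact hnadj (hw w' hw'w)
    exact (ncard_le_ncard hsub).trans_lt (by rw [ncard_singleton]; omega)
  have : Nonempty V := ⟨x⟩
  exact ktupleDomNum_eq_of_isKTupleDomSet hdom hcard fun E hE => hE.lt_ncard huniv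
end
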